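/- arXiv:1704.07927 — 2 statements merged into one kernel-verified Lean document; each statement's English description precedes it below -/
import Mathlib

section
/- Fix δ ∈ (0, 1/2) and integers r₀ ≤ r. Let a_n, b_n, c_n ∈ ℚ with a_n ≠ 0 and c_n ≠ 0 for r₀ − 3 ≤ n ≤ r + 3, and let y_n ∈ ℚ \ {0} for r₀ − 3 ≤ n ≤ r + 3 satisfy y_{n+1} + y_{n−1} = (a_n y_n² + b_n y_n + c_n)/y_n² for r₀ − 2 ≤ n ≤ r + 2. Let |·| denote the usual archimedean absolute value on ℚ, let ε_n be defined with κ = 3, and set S₁ = {n : r₀ ≤ n ≤ r and |y_n| < ε_n}. Then Σ_{k∈S₁} log(1/|y_k|) ≤ (1/(2−δ)) Σ_{k=r₀−1}^{r+1} log⁺|y_k|. -/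
/-!
At a small site `n` (`|y_n| < ε_n`) the recurrence, solved for `c_n`, forces a huge neighbour:
`|y_{n±1}| ≥ |y_n| ^ (δ - 2)`, i.e. `(2 - δ) log (1 / |y_n|) ≤ log⁺ |y_{n±1}|`. Solved for `a_{n+1}`
instead, it shows that `y_{n+1}` cannot be the huge neighbour of both small sites `n` and `n + 2`.
So the small sites inject into their huge neighbours, which lie in `[r₀ - 1, r + 1]`, and summing
gives the estimate.
-/

/-- The quantity `κ · max{1, |c_n|⁻¹, |b_n|, |a_n|, |c_{n+1}|, |c_{n-1}|, |b_{n+1}|, |b_{n-1}|,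
|a_{n+1}|⁻¹, |a_{n-1}|⁻¹}` from the definition of the length scale `ε_n`, for an absolute
value `v` on `ℚ`. -/
noncomputable def epsBound (κ : ℝ) (v : ℚ → ℝ) (a b c : ℤ → ℚ) (n : ℤ) : ℝ :=
  κ * max 1 (max (v (c n))⁻¹ (max (v (b n)) (max (v (a n)) (max (v (c (n + 1)))
    (max (v (c (n - 1))) (max (v (b (n + 1))) (max (v (b (n - 1)))
      (max (v (a (n + 1)))⁻¹ (v (a (n - 1)))⁻¹))))))))

/-- The length scale `ε_n`, defined by `ε_n^{-δ} = κ · max{1, |c_n|⁻¹, |b_n|, |a_n|,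
|c_{n+1}|, |c_{n-1}|, |b_{n+1}|, |b_{n-1}|, |a_{n+1}|⁻¹, |a_{n-1}|⁻¹}`. -/
noncomputable def epsN (κ δ : ℝ) (v : ℚ → ℝ) (a b c : ℤ → ℚ) (n : ℤ) : ℝ :=
  (epsBound κ v a b c n) ^ (-δ⁻¹)

open Real

lemma le_epsBound {κ : ℝ} (hκ : 0 ≤ κ) (v : ℚ → ℝ) (a b c : ℤ → ℚ) (n : ℤ) :
    ∀ x ∈ [1, (v (c n))⁻¹, v (b n), v (a n), v (c (n + 1)), v (c (n - 1)), v (b (n + 1)),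
      v (b (n - 1)), (v (a (n + 1)))⁻¹, (v (a (n - 1)))⁻¹], κ * x ≤ epsBound κ v a b c n := by
  intro x hx
  refine mul_le_mul_of_nonneg_left ?_ hκ
  simp only [List.mem_cons, List.not_mem_nil, or_false] at hx
  rcases hx with rfl | rfl | rfl | rfl | rfl | rfl | rfl | rfl | rfl | rfl <;> simp

lemma epsN_le_one {κ δ : ℝ} (hκ : 1 ≤ κ) (hδ : 0 ≤ δ) (v : ℚ → ℝ) (a b c : ℤ → ℚ) (n : ℤ) :
    epsN κ δ v a b c n ≤ 1 := by
  refine rpow_le_one_of_one_le_of_nonpos ?_ (neg_nonpos.mpr (inv_nonneg.mpr hδ))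
  have := le_epsBound (κ := κ) (by linarith) v a b c n 1 (by simp)
  linarith [mul_one κ]

lemma rpow_mul_lt_one_of_lt_rpow_neg_inv {δ B t : ℝ} (hδ : 0 < δ) (hB : 0 < B) (ht : 0 ≤ t)
    (h : t < B ^ (-δ⁻¹)) : t ^ δ * B < 1 := by
  have : t ^ δ < B⁻¹ := by
    calc t ^ δ < (B ^ (-δ⁻¹)) ^ δ := rpow_lt_rpow ht h hδ
      _ = B⁻¹ := by rw [← rpow_mul hB.le, neg_mul, inv_mul_cancel₀ hδ.ne', rpow_neg_one]
  rwa [inv_eq_one_div, lt_div_iff₀ hB] at this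

lemma le_rpow_sq {δ t : ℝ} (hδ₀ : 0 ≤ δ) (hδ : δ ≤ 1 / 2) (ht₀ : 0 ≤ t) (ht₁ : t ≤ 1) :
    t ≤ (t ^ δ) ^ 2 := by
  calc t = t ^ (1 : ℝ) := (rpow_one t).symm
    _ ≤ t ^ (δ * 2) := rpow_le_rpow_of_exponent_ge' ht₀ ht₁ (by positivity) (by linarith)
    _ = (t ^ δ) ^ 2 := by rw [rpow_mul ht₀]; norm_cast

lemma rpow_le_mul_sq_iff {δ t Y : ℝ} (ht : 0 < t) (hY : 0 < Y) :
    t ^ δ ≤ Y * t ^ 2 ↔ (2 - δ) * log (1 / t) ≤ log Y := by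
  rw [← log_le_log_iff (rpow_pos_of_pos ht δ) (by positivity), log_rpow ht, log_mul hY.ne'
    (by positivity), log_pow, one_div, log_inv]
  push_cast
  constructor <;> intro <;> linarith

lemma abs_le_of_recurrence {x z w a b c : ℝ} (hw : w ≠ 0)
    (h : x + z = (a * w ^ 2 + b * w + c) / w ^ 2) :
    |c| ≤ (|x| + |z|) * |w| ^ 2 + |b| * |w| + |a| * |w| ^ 2 ∧
      |a| * |w| ^ 2 ≤ (|x| + |z|) * |w| ^ 2 + |b| * |w| + |c| := by
  rw [eq_div_iff (pow_ne_zero 2 hw)] at h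
  constructor
  · calc |c| = |x * w ^ 2 + z * w ^ 2 + (-(b * w) + -(a * w ^ 2))| := by
          congr 1; linear_combination -h
      _ ≤ |x * w ^ 2| + |z * w ^ 2| + (|b * w| + |a * w ^ 2|) := by
          grw [abs_add_three, abs_add_le, abs_neg, abs_neg]
      _ = _ := by simp only [abs_mul, abs_pow]; ring
  · calc |a| * |w| ^ 2 = |x * w ^ 2 + z * w ^ 2 + (-(b * w) + -c)| := by
          rw [← abs_pow, ← abs_mul]; congr 1; linear_combination -h
      _ ≤ |x * w ^ 2| + |z * w ^ 2| + (|b * w| + |c|) := by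
          grw [abs_add_three, abs_add_le, abs_neg, abs_neg]
      _ = _ := by simp only [abs_mul, abs_pow]; ring

-- In the next two lemmas `t = |y_n|`, `p = t ^ δ` and `B = ε_n ^ (-δ)`; the other variables are
-- the absolute values of the coefficients and neighbours appearing in the recurrence.
lemma le_max_mul_sq_of_le_quadratic {t p B a b c Y Z : ℝ} (ht : 0 ≤ t) (hp : 0 < p)
    (hB : 3 ≤ B) (hpB : p * B < 1) (htp : t ≤ p ^ 2) (ha : 3 * a ≤ B) (hb : 3 * b ≤ B)
    (hc : 3 ≤ B * c) (h : c ≤ (Y + Z) * t ^ 2 + b * t + a * t ^ 2) : p ≤ max Y Z * t ^ 2 := by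
  have hp1 : p < 1 := by nlinarith
  have hcp : 3 * p < c := by nlinarith
  have hbt : 3 * (b * t) < p := by
    calc 3 * (b * t) ≤ B * p ^ 2 := by nlinarith
      _ < p := by nlinarith
  have hat : 3 * (a * t ^ 2) < p := by
    have ht2 : t ^ 2 ≤ p ^ 4 := by nlinarith
    calc 3 * (a * t ^ 2) ≤ B * p ^ 4 := by nlinarith
      _ < p ^ 3 := by nlinarith [mul_lt_mul_of_pos_right hpB (pow_pos hp 3)]
      _ ≤ p := by nlinarith
  have hYZ : (Y + Z) * t ^ 2 ≤ 2 * (max Y Z * t ^ 2) := by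
    nlinarith [le_max_left Y Z, le_max_right Y Z, sq_nonneg t]
  linarith

lemma mul_sq_lt_of_le_quadratic {t p s q B B' a b c Y : ℝ} (ht : 0 ≤ t) (hp : 0 < p)
    (hq : 0 < q) (hB : 3 ≤ B) (hB' : 3 ≤ B') (hpB : p * B < 1) (hqB : q * B' < 1)
    (htp : t ≤ p ^ 2) (hsq : s ≤ q ^ 2) (ha : 3 ≤ B * a) (ha' : 3 ≤ B' * a) (hb : 3 * b ≤ B)
    (hc : 3 * c ≤ B) (h : a * Y ^ 2 ≤ (s + t) * Y ^ 2 + b * Y + c) : Y * t ^ 2 < p := by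
  by_contra! hY
  have hY0 : 0 < Y := by
    by_contra! hY0; nlinarith [sq_nonneg t]
  have hp3 : p < 1 / 3 := by nlinarith
  have hq3 : q < 1 / 3 := by nlinarith
  have hYp : 1 ≤ Y * p ^ 3 := by
    have ht2 : t ^ 2 ≤ p ^ 4 := by nlinarith
    have : p * 1 ≤ p * (Y * p ^ 3) := by nlinarith
    exact le_of_mul_le_mul_left this hp
  have hbY : 3 * (b * Y) ≤ p ^ 2 * Y ^ 2 := by
    have : 3 * (b * Y) * p ≤ p ^ 2 * Y ^ 2 * p := by
      nlinarith [mul_le_mul_of_nonneg_right hb (mul_nonneg hY0.le hp.le),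
        mul_lt_mul_of_pos_right hpB hY0, mul_le_mul_of_nonneg_left hYp hY0.le]
    exact le_of_mul_le_mul_right this hp
  have hcY : 3 * c ≤ p ^ 5 * Y ^ 2 := by
    have h6 : 1 ≤ Y ^ 2 * p ^ 6 := by nlinarith
    have : 3 * c * p ≤ p ^ 5 * Y ^ 2 * p := by nlinarith
    exact le_of_mul_le_mul_right this hp
  have ha_le : a ≤ s + t + p ^ 2 / 3 + p ^ 5 / 3 := by
    have : a * Y ^ 2 ≤ (s + t + p ^ 2 / 3 + p ^ 5 / 3) * Y ^ 2 := by nlinarith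
    exact le_of_mul_le_mul_right this (by positivity)
  have hpa : 3 * p < a := by nlinarith
  have hqa : 3 * q < a := by nlinarith
  have hp5 : p ^ 5 ≤ p := by
    have := pow_le_pow_of_le_one hp.le (by linarith) (show 1 ≤ 5 by norm_num)
    rwa [pow_one] at this
  nlinarith

lemma sum_le_sum_of_le_neighbor {S T : Finset ℤ} {g f : ℤ → ℝ}
    (hST : ∀ n ∈ S, n + 1 ∈ T ∧ n - 1 ∈ T) (hf : ∀ k ∈ T, 0 ≤ f k)
    (hle : ∀ n ∈ S, g n ≤ f (n + 1) ∨ g n ≤ f (n - 1))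
    (hgap : ∀ n ∈ S, n + 2 ∈ S → f (n + 1) < g n) :
    ∑ n ∈ S, g n ≤ ∑ k ∈ T, f k := by
  -- Preferring the right neighbour, two sites can only share a witness if they are `n` and
  -- `n + 2` with `g n ≤ f (n + 1)`, which `hgap` rules out.
  let w : ℤ → ℤ := fun n => if g n ≤ f (n + 1) then n + 1 else n - 1
  have hw : ∀ n ∈ S, g n ≤ f (w n) := by
    intro n hn
    by_cases h : g n ≤ f (n + 1)
    · simp [w, h]
    · simpa [w, h] using (hle n hn).resolve_left h
  have hwT : ∀ n ∈ S, w n ∈ T := by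
    intro n hn
    by_cases h : g n ≤ f (n + 1)
    · simpa [w, h] using (hST n hn).1
    · simpa [w, h] using (hST n hn).2
  have hinj : Set.InjOn w S := by
    intro m hm k hk hmk
    simp only [w] at hmk
    split_ifs at hmk with hm' hk' hk' <;> try omega
    · obtain rfl : k = m + 2 := by omega
      exact absurd hm' (hgap m hm hk).not_ge
    · obtain rfl : m = k + 2 := by omega
      exact absurd hk' (hgap k hk hm).not_ge
  calc ∑ n ∈ S, g n ≤ ∑ n ∈ S, f (w n) := Finset.sum_le_sum hw
    _ = ∑ k ∈ S.image w, f k := (Finset.sum_image hinj).symm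
    _ ≤ ∑ k ∈ T, f k := Finset.sum_le_sum_of_subset_of_nonneg
        (Finset.image_subset_iff.mpr hwT) fun k hk _ => hf k hk

section

variable {δ : ℝ} {a b c y : ℤ → ℚ} {n : ℤ}

lemma small_site_bounds (hδ : 0 < δ) (hδ' : δ ≤ 1 / 2)
    (hsmall : |(y n : ℝ)| < epsN 3 δ (fun x => |(x : ℝ)|) a b c n) :
    |(y n : ℝ)| ^ δ * epsBound 3 (fun x => |(x : ℝ)|) a b c n < 1 ∧
      |(y n : ℝ)| ≤ (|(y n : ℝ)| ^ δ) ^ 2 := by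
  have hB := le_epsBound (κ := 3) (by norm_num) (fun x : ℚ => |(x : ℝ)|) a b c n 1 (by simp)
  have ht₁ := hsmall.le.trans (epsN_le_one (by norm_num) hδ.le _ _ _ _ _)
  exact ⟨rpow_mul_lt_one_of_lt_rpow_neg_inv hδ (by linarith) (abs_nonneg _) hsmall,
    le_rpow_sq hδ.le hδ' (abs_nonneg _) ht₁⟩

lemma rpow_le_abs_neighbor_mul_sq (hδ : 0 < δ) (hδ' : δ ≤ 1 / 2) (hc : c n ≠ 0)
    (hy : y n ≠ 0) (hrec : y (n + 1) + y (n - 1) = (a n * y n ^ 2 + b n * y n + c n) / y n ^ 2)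
    (hsmall : |(y n : ℝ)| < epsN 3 δ (fun x => |(x : ℝ)|) a b c n) :
    |(y n : ℝ)| ^ δ ≤ |(y (n + 1) : ℝ)| * |(y n : ℝ)| ^ 2 ∨
      |(y n : ℝ)| ^ δ ≤ |(y (n - 1) : ℝ)| * |(y n : ℝ)| ^ 2 := by
  have hB := le_epsBound (κ := 3) (by norm_num) (fun x : ℚ => |(x : ℝ)|) a b c n
  obtain ⟨hpB, htp⟩ := small_site_bounds hδ hδ' hsmall
  have hrecR : ((y (n + 1) : ℚ) : ℝ) + y (n - 1) =
      (a n * (y n : ℝ) ^ 2 + b n * y n + c n) / (y n : ℝ) ^ 2 := by exact_mod_cast hrec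
  have hC : 3 ≤ epsBound 3 (fun x => |(x : ℝ)|) a b c n * |(c n : ℝ)| :=
    (mul_inv_le_iff₀ (by positivity)).mp (hB _ (by simp))
  have hmax := le_max_mul_sq_of_le_quadratic (abs_nonneg _) (by positivity)
    (by simpa using hB 1 (by simp)) hpB htp (hB _ (by simp)) (hB _ (by simp)) hC
    (abs_le_of_recurrence (by exact_mod_cast hy) hrecR).1
  rwa [max_mul_of_nonneg _ _ (sq_nonneg _), le_max_iff] at hmax

lemma abs_mul_sq_lt_rpow_of_small_sites (hδ : 0 < δ) (hδ' : δ ≤ 1 / 2) (ha : a (n + 1) ≠ 0)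
    (hy₀ : y n ≠ 0) (hy₁ : y (n + 1) ≠ 0) (hy₂ : y (n + 2) ≠ 0)
    (hrec : y (n + 1 + 1) + y (n + 1 - 1) =
      (a (n + 1) * y (n + 1) ^ 2 + b (n + 1) * y (n + 1) + c (n + 1)) / y (n + 1) ^ 2)
    (hsmall₀ : |(y n : ℝ)| < epsN 3 δ (fun x => |(x : ℝ)|) a b c n)
    (hsmall₂ : |(y (n + 2) : ℝ)| < epsN 3 δ (fun x => |(x : ℝ)|) a b c (n + 2)) :
    |(y (n + 1) : ℝ)| * |(y n : ℝ)| ^ 2 < |(y n : ℝ)| ^ δ := by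
  rw [show n + 1 + 1 = n + 2 by ring, show n + 1 - 1 = n by ring] at hrec
  have hB₀ := le_epsBound (κ := 3) (by norm_num) (fun x : ℚ => |(x : ℝ)|) a b c n
  have hB₂ := le_epsBound (κ := 3) (by norm_num) (fun x : ℚ => |(x : ℝ)|) a b c (n + 2)
  rw [show n + 2 - 1 = n + 1 by ring] at hB₂
  obtain ⟨hpB, htp⟩ := small_site_bounds hδ hδ' hsmall₀
  obtain ⟨hqB, hsq⟩ := small_site_bounds hδ hδ' hsmall₂
  have hrecR : ((y (n + 2) : ℚ) : ℝ) + y n = (a (n + 1) * (y (n + 1) : ℝ) ^ 2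
      + b (n + 1) * y (n + 1) + c (n + 1)) / (y (n + 1) : ℝ) ^ 2 := by exact_mod_cast hrec
  have hA₀ : 3 ≤ epsBound 3 (fun x => |(x : ℝ)|) a b c n * |(a (n + 1) : ℝ)| :=
    (mul_inv_le_iff₀ (by positivity)).mp (hB₀ _ (by simp))
  have hA₂ : 3 ≤ epsBound 3 (fun x => |(x : ℝ)|) a b c (n + 2) * |(a (n + 1) : ℝ)| :=
    (mul_inv_le_iff₀ (by positivity)).mp (hB₂ _ (by simp))
  exact mul_sq_lt_of_le_quadratic (abs_nonneg _) (by positivity) (by positivity)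
    (by simpa using hB₀ 1 (by simp)) (by simpa using hB₂ 1 (by simp)) hpB hqB htp hsq hA₀ hA₂
    (hB₀ _ (by simp)) (hB₀ _ (by simp)) (abs_le_of_recurrence (by exact_mod_cast hy₁) hrecR).2

end

open Classical in
theorem small_site_sum_estimate_arch_general
    (δ : ℝ) (hδ : δ ∈ Set.Ioo (0 : ℝ) (1 / 2)) (r₀ r : ℤ)
    (a b c y : ℤ → ℚ)
    (ha : ∀ n, r₀ - 3 ≤ n → n ≤ r + 3 → a n ≠ 0)
    (hc : ∀ n, r₀ - 3 ≤ n → n ≤ r + 3 → c n ≠ 0)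
    (hy : ∀ n, r₀ - 3 ≤ n → n ≤ r + 3 → y n ≠ 0)
    (heq : ∀ n, r₀ - 2 ≤ n → n ≤ r + 2 →
      y (n + 1) + y (n - 1) = (a n * y n ^ 2 + b n * y n + c n) / y n ^ 2) :
    ∑ k ∈ (Finset.Icc r₀ r).filter
        (fun n => |(y n : ℝ)| < epsN 3 δ (fun x => |(x : ℝ)|) a b c n),
      Real.log (1 / |(y k : ℝ)|) ≤
    (1 / (2 - δ)) * ∑ k ∈ Finset.Icc (r₀ - 1) (r + 1), max (Real.log |(y k : ℝ)|) 0 := by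
  obtain ⟨hδ₀, hδ₁⟩ := hδ
  have hpos : ∀ n, r₀ - 3 ≤ n → n ≤ r + 3 → 0 < |(y n : ℝ)| := fun n h₁ h₂ =>
    abs_pos.mpr (Rat.cast_ne_zero.mpr (hy n h₁ h₂))
  rw [one_div_mul_eq_div, le_div_iff₀ (by linarith), Finset.sum_mul]
  simp_rw [mul_comm _ (2 - δ)]
  refine sum_le_sum_of_le_neighbor (fun n hn => ?_) (fun k _ => le_max_right _ _)
    (fun n hn => ?_) (fun n hn hn₂ => ?_)
  · simp only [Finset.mem_filter, Finset.mem_Icc] at hn ⊢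
    omega
  · simp only [Finset.mem_filter, Finset.mem_Icc] at hn
    obtain ⟨⟨h₁, h₂⟩, hsmall⟩ := hn
    refine (rpow_le_abs_neighbor_mul_sq hδ₀ hδ₁.le (hc n (by omega) (by omega))
      (hy n (by omega) (by omega)) (heq n (by omega) (by omega)) hsmall).imp ?_ ?_ <;>
    exact fun h => ((rpow_le_mul_sq_iff (hpos _ (by omega) (by omega))
      (hpos _ (by omega) (by omega))).mp h).trans (le_max_left _ _)
  · simp only [Finset.mem_filter, Finset.mem_Icc] at hn hn₂
    obtain ⟨⟨h₁, h₂⟩, hsmall₀⟩ := hn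
    have hlt := abs_mul_sq_lt_rpow_of_small_sites hδ₀ hδ₁.le (ha (n + 1) (by omega) (by omega))
      (hy n (by omega) (by omega)) (hy (n + 1) (by omega) (by omega))
      (hy (n + 2) (by omega) (by omega)) (heq (n + 1) (by omega) (by omega)) hsmall₀ hn₂.2
    have ht₁ := hsmall₀.trans_le (epsN_le_one (by norm_num) hδ₀.le _ _ _ _ _)
    have ht₀ := hpos n (by omega) (by omega)
    refine max_lt (not_le.mp fun h => hlt.not_ge ((rpow_le_mul_sq_iff ht₀
      (hpos _ (by omega) (by omega))).mpr h)) (mul_pos (by linarith) (log_pos ?_))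
    rw [one_div]
    exact one_lt_inv_iff₀.mpr ⟨ht₀, ht₁⟩

open Classical in
/-- With `S₁ = {n : r₀ ≤ n ≤ r, |y_n| < ε_n}` (archimedean absolute value, `κ = 3`),
`Σ_{k ∈ S₁} log(1/|y_k|) ≤ (1/(2-δ)) Σ_{k=r₀-1}^{r+1} log⁺|y_k|`. -/
theorem small_site_sum_estimate_arch
    (δ : ℝ) (hδ : δ ∈ Set.Ioo (0 : ℝ) (1 / 2)) (r₀ r : ℤ) (hr : r₀ ≤ r)
    (a b c y : ℤ → ℚ)
    (ha : ∀ n, r₀ - 3 ≤ n → n ≤ r + 3 → a n ≠ 0)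
    (hc : ∀ n, r₀ - 3 ≤ n → n ≤ r + 3 → c n ≠ 0)
    (hy : ∀ n, r₀ - 3 ≤ n → n ≤ r + 3 → y n ≠ 0)
    (heq : ∀ n, r₀ - 2 ≤ n → n ≤ r + 2 →
      y (n + 1) + y (n - 1) = (a n * y n ^ 2 + b n * y n + c n) / y n ^ 2) :
    ∑ k ∈ (Finset.Icc r₀ r).filter
        (fun n => |(y n : ℝ)| < epsN 3 δ (fun x => |(x : ℝ)|) a b c n),
      Real.log (1 / |(y k : ℝ)|) ≤
    (1 / (2 - δ)) * ∑ k ∈ Finset.Icc (r₀ - 1) (r + 1), max (Real.log |(y k : ℝ)|) 0 :=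
  small_site_sum_estimate_arch_general δ hδ r₀ r a b c y ha hc hy heq
end

section
/- Let y be a meromorphic function on ℂ satisfying y(z+1) + y(z−1) = (a(z) y(z)² + b(z) y(z) + c(z))/y(z)² as an identity of meromorphic functions, where a, b, c are rational functions. Let ẑ ∈ ℂ be such that a, b, c are analytic at ẑ + 1, y has a zero of order k ≥ 1 at ẑ, and y (as a function of z) has a pole of order exactly 2k at ẑ + 1. Then the function z ↦ y(z+2) − a(z+1) has a zero of order exactly k at ẑ; in particular y is analytic at ẑ + 2 with value y(ẑ+2) = a(ẑ+1). -/
/-- Two functions agree off some countable set; for meromorphic functions on `ℂ` this is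
equality as meromorphic functions. -/
def EqOffCountable (f g : ℂ → ℂ) : Prop :=
  ∃ S : Set ℂ, S.Countable ∧ ∀ z ∉ S, f z = g z

open Classical in
/-- The order of a meromorphic function at a point: positive order `k` is a zero of order
`k`, negative order `-m` is a pole of order `m` (junk value `0` if `f` is not meromorphic
at the point). -/
noncomputable def meroOrder (f : ℂ → ℂ) (z : ℂ) : WithTop ℤ :=
  if h : MeromorphicAt f z then meromorphicOrderAt f z else 0

/-!
Shifting the equation by one, near `ẑ` we have
`y(z+2) - a(z+1) = -y(z) + b(z+1)/y(z+1) + c(z+1)/y(z+1)²`.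
The term `-y(z)` has order `k`, while the pole of order `2k` of `y` at `ẑ + 1` gives the other
two terms order at least `2k > k`; hence the sum has order exactly `k`. In particular it tends
to `0`, so `y(z+2) → a(ẑ+1)` by continuity of `a`.

Equality off a countable set is enough, since punctured neighbourhoods in `ℂ` are uncountable
and a meromorphic function either vanishes identically near a point or not at all.
-/

open Filter Topology

theorem WithTop.one_le_iff_pos {α : Type*} [PartialOrder α] [AddMonoidWithOne α]
    [ZeroLEOneClass α] [NeZero (1 : α)] [SuccAddOrder α] (a : WithTop α) :
    1 ≤ a ↔ 0 < a := by
  cases a <;> simp [Order.one_le_iff_pos]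

theorem meroOrder_eq_meromorphicOrderAt (f : ℂ → ℂ) (z : ℂ) :
    meroOrder f z = meromorphicOrderAt f z := by
  unfold meroOrder
  split_ifs with hf
  · rfl
  · exact (meromorphicOrderAt_of_not_meromorphicAt hf).symm

theorem Set.Countable.notMem_nhdsNE {E : Type*} [NormedAddCommGroup E] [NormedSpace ℝ E]
    [Nontrivial E] {s : Set E} (hs : s.Countable) (x : E) : s ∉ 𝓝[≠] x := fun h =>
  have hint : x ∈ interior (insert x s) := mem_interior_iff_mem_nhds.2 (insert_mem_nhds_iff.2 h)
  by rwa [interior_eq_empty_iff_dense_compl.2 ((hs.insert x).dense_compl ℝ)] at hint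

theorem MeromorphicAt.eventuallyEq_of_eqOffCountable {f g : ℂ → ℂ} {x : ℂ}
    (hf : MeromorphicAt f x) (hg : MeromorphicAt g x) (h : EqOffCountable f g) :
    f =ᶠ[𝓝[≠] x] g := by
  obtain ⟨S, hS, hfg⟩ := h
  refine ((hf.sub hg).eventually_eq_zero_or_eventually_ne_zero.resolve_right fun hne => ?_).mono
    fun z hz => sub_eq_zero.1 hz
  exact hS.notMem_nhdsNE x <| hne.mono fun z hz =>
    by_contra fun hzS => hz (sub_eq_zero.2 (hfg z hzS))

section

variable {𝕜 : Type*} [NontriviallyNormedField 𝕜] {x : 𝕜}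

theorem RatFunc.analyticAt_eval {r : RatFunc 𝕜} (hx : r.denom.eval x ≠ 0) :
    AnalyticAt 𝕜 (fun z => r.eval (RingHom.id 𝕜) z) x :=
  (AnalyticOnNhd.eval_polynomial r.num x trivial).div
    (AnalyticOnNhd.eval_polynomial r.denom x trivial) hx

theorem AnalyticAt.neg_le_meromorphicOrderAt_div {f g : 𝕜 → 𝕜} (hf : AnalyticAt 𝕜 f x)
    (hg : MeromorphicAt g x) {n : ℤ} (hn : meromorphicOrderAt g x = n) :
    ((-n : ℤ) : WithTop ℤ) ≤ meromorphicOrderAt (f / g) x := by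
  rw [meromorphicOrderAt_div hf.meromorphicAt hg, hn]
  have hf₀ := hf.meromorphicOrderAt_nonneg
  cases h : meromorphicOrderAt f x with
  | top => simp
  | coe m =>
    rw [h] at hf₀
    norm_cast at hf₀ ⊢
    omega

theorem meromorphicOrderAt_sub_eq_of_recurrence {w u v A B C : 𝕜 → 𝕜} {k : ℤ} (hk : 0 < k)
    (hu : meromorphicOrderAt u x = k) (hv : meromorphicOrderAt v x = ↑(-(2 * k)))
    (hB : AnalyticAt 𝕜 B x) (hC : AnalyticAt 𝕜 C x)
    (heq : ∀ᶠ z in 𝓝[≠] x, w z + u z = (A z * v z ^ 2 + B z * v z + C z) / v z ^ 2) :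
    meromorphicOrderAt (w - A) x = k := by
  have hv' : MeromorphicAt v x := meromorphicAt_of_meromorphicOrderAt_ne_zero <| by
    rw [hv]; exact_mod_cast (by omega : -(2 * k) ≠ 0)
  have hv₀ : ∀ᶠ z in 𝓝[≠] x, v z ≠ 0 :=
    (meromorphicOrderAt_ne_top_iff_eventually_ne_zero hv').1 (by rw [hv]; exact WithTop.coe_ne_top)
  have hsolve : w - A =ᶠ[𝓝[≠] x] -u + (B / v + C / v ^ 2) := by
    filter_upwards [heq, hv₀] with z hz hvz
    simp only [Pi.sub_apply, Pi.add_apply, Pi.neg_apply, Pi.div_apply, Pi.pow_apply]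
    field_simp at hz ⊢
    linear_combination hz
  have hv2 : meromorphicOrderAt (v ^ 2) x = ↑(-(4 * k)) := by
    rw [meromorphicOrderAt_pow hv', hv, ← WithTop.coe_natCast, ← WithTop.coe_mul]
    congr 1
    ring
  have hBv := hB.neg_le_meromorphicOrderAt_div hv' hv
  have hCv := hC.neg_le_meromorphicOrderAt_div (hv'.pow 2) hv2
  have hlt : meromorphicOrderAt (-u) x < meromorphicOrderAt (B / v + C / v ^ 2) x :=
    calc meromorphicOrderAt (-u) x = k := by rw [← meromorphicOrderAt_neg, hu]
      _ < ((-(-(2 * k)) : ℤ) : WithTop ℤ) := by exact_mod_cast (by omega)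
      _ ≤ _ := (le_min hBv (le_trans (by exact_mod_cast (by omega)) hCv)).trans
        (meromorphicOrderAt_add (hB.meromorphicAt.div hv') (hC.meromorphicAt.div (hv'.pow 2)))
  rw [meromorphicOrderAt_congr hsolve, meromorphicOrderAt_add_eq_left_of_lt
    ((hB.meromorphicAt.div hv').add (hC.meromorphicAt.div (hv'.pow 2))) hlt,
    ← meromorphicOrderAt_neg, hu]

theorem meromorphicOrderAt_sub_const_pos {E : Type*} [NormedAddCommGroup E] [NormedSpace 𝕜 E]
    {f A : 𝕜 → E} (hf : MeromorphicAt f x) (hA : ContinuousAt A x)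
    (h : 0 < meromorphicOrderAt (f - A) x) : 0 < meromorphicOrderAt (fun z => f z - A x) x := by
  refine (tendsto_zero_iff_meromorphicOrderAt_pos (by fun_prop)).1 ?_
  have hA' : Tendsto (fun z => A z - A x) (𝓝[≠] x) (𝓝 0) :=
    (tendsto_sub_nhds_zero_iff.2 hA).mono_left nhdsWithin_le_nhds
  simpa using (tendsto_zero_of_meromorphicOrderAt_pos h).add hA'

end

/-- If a meromorphic `y` solves `y(z+1) + y(z-1) = (a y² + b y + c)/y²` with rational
coefficients, `a`, `b`, `c` are analytic at `ẑ + 1`, `y` has a zero of order `k ≥ 1` at `ẑ`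
and a pole of order exactly `2k` at `ẑ + 1`, then `z ↦ y(z+2) - a(z+1)` has a zero of order
exactly `k` at `ẑ`; in particular `y` is analytic at `ẑ + 2` with value `a(ẑ+1)`. -/
theorem zero_pole_zero_pattern
    (y : ℂ → ℂ) (hy : MeromorphicOn y Set.univ)
    (a b c : RatFunc ℂ)
    (heq : EqOffCountable (fun z => y (z + 1) + y (z - 1))
      (fun z => (a.eval (RingHom.id ℂ) z * y z ^ 2 + b.eval (RingHom.id ℂ) z * y z +
        c.eval (RingHom.id ℂ) z) / y z ^ 2))
    (zhat : ℂ)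
    (haz : a.denom.eval (zhat + 1) ≠ 0) (hbz : b.denom.eval (zhat + 1) ≠ 0)
    (hcz : c.denom.eval (zhat + 1) ≠ 0)
    (k : ℕ) (hk : 1 ≤ k) (hordz : meroOrder y zhat = ((k : ℤ) : WithTop ℤ))
    (hordp : meroOrder y (zhat + 1) = ((-(2 * (k : ℤ)) : ℤ) : WithTop ℤ)) :
    meroOrder (fun z => y (z + 2) - a.eval (RingHom.id ℂ) (z + 1)) zhat
        = ((k : ℤ) : WithTop ℤ) ∧
      ((1 : ℤ) : WithTop ℤ) ≤
        meroOrder (fun z => y z - a.eval (RingHom.id ℂ) (zhat + 1)) (zhat + 2) := by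
  have hA := RatFunc.analyticAt_eval haz
  have hB := RatFunc.analyticAt_eval hbz
  have hC := RatFunc.analyticAt_eval hcz
  have hy' : MeromorphicAt y (zhat + 1) := hy _ trivial
  have hnext : MeromorphicAt (fun z => y (z + 1)) (zhat + 1) :=
    meromorphicAt_comp_add_const_iff_meromorphicAt.2 (hy _ trivial)
  have hprev : MeromorphicAt (fun z => y (z - 1)) (zhat + 1) :=
    meromorphicAt_comp_sub_const_iff_meromorphicAt.2 (hy _ trivial)
  have hrecur := (hnext.add hprev).eventuallyEq_of_eqOffCountable (by fun_prop) heq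
  have hu : meromorphicOrderAt (fun z => y (z - 1)) (zhat + 1) = (k : ℤ) := by
    rw [meromorphicOrderAt_fun_comp_sub_const_eq_meromorphicOrderAt, add_sub_cancel_right,
      ← meroOrder_eq_meromorphicOrderAt, hordz]
  have hv := (meroOrder_eq_meromorphicOrderAt y _).symm.trans hordp
  have hord := meromorphicOrderAt_sub_eq_of_recurrence (by omega) hu hv hB hC hrecur
  have hpos := meromorphicOrderAt_sub_const_pos hnext hA.continuousAt
    (by rw [hord]; exact_mod_cast (by omega : (0 : ℤ) < k))
  constructor
  · rw [meroOrder_eq_meromorphicOrderAt, ← hord,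
      ← meromorphicOrderAt_fun_comp_add_const_eq_meromorphicOrderAt]
    congr 1
    funext z
    simp only [Pi.sub_apply, add_assoc, one_add_one_eq_two]
  · rw [meroOrder_eq_meromorphicOrderAt, WithTop.coe_one, WithTop.one_le_iff_pos,
      show zhat + 2 = zhat + 1 + 1 by ring,
      ← meromorphicOrderAt_fun_comp_add_const_eq_meromorphicOrderAt]
    exact hpos
end
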